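/- arXiv:1411.7818 — 7 statements merged into one kernel-verified Lean document; each statement's English description precedes it below -/
import Mathlib

section
/- If G is a graph with domination number γ(G) ≤ Δ(G), then for every integer i with γ(G) ≤ i ≤ Δ(G), the i-quasiperfect domination number γ_{1i}(G) equals γ(G). -/
/-- `S` is a `k`-quasiperfect dominating set of `G`: every vertex not in `S` has
at least one and at most `k` neighbors in `S`. -/
def IsQPDomSet {V : Type*} (G : SimpleGraph V) (k : ℕ) (S : Set V) : Prop :=
  ∀ v ∉ S, 1 ≤ (S ∩ G.neighborSet v).ncard ∧ (S ∩ G.neighborSet v).ncard ≤ k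

/-- The `k`-quasiperfect domination number `γ_{1k}(G)`. -/
noncomputable def qpNum {V : Type*} (G : SimpleGraph V) (k : ℕ) : ℕ :=
  sInf {m | ∃ S : Set V, IsQPDomSet G k S ∧ S.ncard = m}

/-- The domination number `γ(G)`. -/
noncomputable def domNum {V : Type*} (G : SimpleGraph V) : ℕ :=
  sInf {m | ∃ S : Set V, (∀ v ∉ S, ∃ u ∈ S, G.Adj v u) ∧ S.ncard = m}

/-- The maximum degree `Δ(G)`. -/
noncomputable def maxDeg {V : Type*} (G : SimpleGraph V) : ℕ :=
  sSup {d | ∃ v, (G.neighborSet v).ncard = d}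

/-!
A minimum dominating set has only `γ(G) ≤ i` vertices, so no vertex can have more than `i`
neighbours in it: it is already `i`-quasiperfect, whence `γ_{1i}(G) ≤ γ(G)`. Conversely every
quasiperfect dominating set dominates, whence `γ(G) ≤ γ_{1i}(G)`.
-/

def IsDominating {V : Type*} (G : SimpleGraph V) (S : Set V) : Prop :=
  ∀ v ∉ S, ∃ u ∈ S, G.Adj v u

section

variable {V : Type*} {G : SimpleGraph V} {k : ℕ} {S : Set V}

theorem exists_isDominating_ncard_eq_domNum (G : SimpleGraph V) :
    ∃ S, IsDominating G S ∧ S.ncard = domNum G :=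
  Nat.sInf_mem (s := {m | ∃ S : Set V, IsDominating G S ∧ S.ncard = m})
    ⟨_, Set.univ, fun v hv => absurd (Set.mem_univ v) hv, rfl⟩

theorem exists_isQPDomSet_ncard_eq_qpNum (hS : IsQPDomSet G k S) :
    ∃ T, IsQPDomSet G k T ∧ T.ncard = qpNum G k :=
  Nat.sInf_mem (s := {m | ∃ T : Set V, IsQPDomSet G k T ∧ T.ncard = m})
    ⟨_, S, hS, rfl⟩

theorem domNum_le_ncard (hS : IsDominating G S) : domNum G ≤ S.ncard :=
  Nat.sInf_le ⟨S, hS, rfl⟩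

theorem qpNum_le_ncard (hS : IsQPDomSet G k S) : qpNum G k ≤ S.ncard :=
  Nat.sInf_le ⟨S, hS, rfl⟩

theorem IsQPDomSet.isDominating (hS : IsQPDomSet G k S) : IsDominating G S := fun v hv =>
  Set.nonempty_of_ncard_ne_zero (Nat.one_le_iff_ne_zero.mp (hS v hv).1)

theorem IsDominating.isQPDomSet [Finite V] (hS : IsDominating G S) (hk : S.ncard ≤ k) :
    IsQPDomSet G k S := by
  intro v hv
  obtain ⟨u, hu, huv⟩ := hS v hv
  exact ⟨(Set.ncard_pos).mpr ⟨u, hu, huv⟩,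
    (Set.ncard_inter_le_ncard_left _ _).trans hk⟩

theorem qpNum_eq_domNum [Finite V] (hk : domNum G ≤ k) : qpNum G k = domNum G := by
  obtain ⟨S, hS, hScard⟩ := exists_isDominating_ncard_eq_domNum G
  have hSqp : IsQPDomSet G k S := hS.isQPDomSet (hScard ▸ hk)
  obtain ⟨T, hT, hTcard⟩ := exists_isQPDomSet_ncard_eq_qpNum hSqp
  apply le_antisymm
  · exact hScard ▸ qpNum_le_ncard hSqp
  · exact hTcard ▸ domNum_le_ncard hT.isDominating

end

theorem stmt_0_general {V : Type*} [Fintype V] (G : SimpleGraph V) :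
    ∀ i : ℕ, domNum G ≤ i → i ≤ maxDeg G → qpNum G i = domNum G :=
  fun _ hi _ => qpNum_eq_domNum hi

theorem stmt_0 {V : Type*} [Fintype V] (G : SimpleGraph V)
    (h : domNum G ≤ maxDeg G) :
    ∀ i : ℕ, domNum G ≤ i → i ≤ maxDeg G → qpNum G i = domNum G :=
  stmt_0_general G
end

section
/- For the cycle C_n with n ≥ 4, the 2-quasiperfect domination number equals ⌈n/3⌉, which equals the domination number of C_n. -/
/-- `S` is a perfect dominating set: every vertex not in `S` has exactly one neighbor in `S`. -/
def IsPerfDomSet {V : Type*} (G : SimpleGraph V) (S : Set V) : Prop :=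
  ∀ v ∉ S, (S ∩ G.neighborSet v).ncard = 1

/-- The perfect domination number `γ_{11}(G)`. -/
noncomputable def perfDomNum {V : Type*} (G : SimpleGraph V) : ℕ :=
  sInf {m | ∃ S : Set V, IsPerfDomSet G S ∧ S.ncard = m}

/-- The minimum degree `δ(G)`. -/
noncomputable def minDeg {V : Type*} (G : SimpleGraph V) : ℕ :=
  sInf {d | ∃ v, (G.neighborSet v).ncard = d}

open Finset

namespace SimpleGraph

variable {V : Type*} (G : SimpleGraph V)

theorem ncard_neighborSet (v : V) [Fintype (G.neighborSet v)] :
    (G.neighborSet v).ncard = G.degree v := by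
  rw [← coe_neighborFinset, Set.ncard_coe_finset, card_neighborFinset_eq_degree]

theorem isQPDomSet_of_degree_le [G.LocallyFinite] {k : ℕ} {S : Set V}
    (hdeg : ∀ v, G.degree v ≤ k) (hS : ∀ v ∉ S, ∃ u ∈ S, G.Adj v u) :
    IsQPDomSet G k S := by
  intro v hv
  obtain ⟨u, huS, hvu⟩ := hS v hv
  refine ⟨(Set.ncard_pos (Set.toFinite _)).mpr ⟨u, huS, hvu⟩, ?_⟩
  calc (S ∩ G.neighborSet v).ncard ≤ (G.neighborSet v).ncard :=
        Set.ncard_le_ncard Set.inter_subset_right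
    _ = G.degree v := G.ncard_neighborSet v
    _ ≤ k := hdeg v

theorem card_le_mul_ncard_of_dominating [Fintype V] [DecidableRel G.Adj] {d : ℕ} {S : Set V}
    (hdeg : ∀ v, G.degree v ≤ d) (hS : ∀ v ∉ S, ∃ u ∈ S, G.Adj v u) :
    Fintype.card V ≤ (d + 1) * S.ncard := by
  classical
  have hcover :
      (univ : Finset V) ⊆ S.toFinset.biUnion fun u => insert u (G.neighborFinset u) := by
    intro v _
    by_cases hv : v ∈ S
    · exact mem_biUnion.mpr ⟨v, Set.mem_toFinset.mpr hv, mem_insert_self _ _⟩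
    · obtain ⟨u, huS, hvu⟩ := hS v hv
      exact mem_biUnion.mpr ⟨u, Set.mem_toFinset.mpr huS,
        mem_insert_of_mem ((G.mem_neighborFinset u v).mpr hvu.symm)⟩
  calc Fintype.card V ≤ ∑ u ∈ S.toFinset, #(insert u (G.neighborFinset u)) :=
        (card_le_card hcover).trans card_biUnion_le
    _ ≤ ∑ _u ∈ S.toFinset, (d + 1) :=
        sum_le_sum fun u _ => (card_insert_le _ _).trans (Nat.succ_le_succ (hdeg u))
    _ = (d + 1) * S.ncard := by rw [sum_const, smul_eq_mul, mul_comm, Set.ncard_eq_toFinset_card']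

end SimpleGraph

open SimpleGraph

theorem IsQPDomSet.dominates {V : Type*} {G : SimpleGraph V} {k : ℕ} {S : Set V}
    (hS : IsQPDomSet G k S) : ∀ v ∉ S, ∃ u ∈ S, G.Adj v u := fun v hv =>
  Set.nonempty_of_ncard_ne_zero (Nat.one_le_iff_ne_zero.mp (hS v hv).1)

theorem cycleGraph_degree_le_two (n : ℕ) (v : Fin n) : (cycleGraph n).degree v ≤ 2 := by
  rcases n with _ | _ | n
  · exact v.elim0
  · simp [cycleGraph_one_eq_bot]
  · rw [cycleGraph_degree_two_le]
    exact card_le_two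

theorem div_three_le_ncard_of_dominates_cycleGraph {n : ℕ} {S : Set (Fin n)}
    (hS : ∀ v ∉ S, ∃ u ∈ S, (cycleGraph n).Adj v u) : (n + 2) / 3 ≤ S.ncard := by
  have := card_le_mul_ncard_of_dominating _ (cycleGraph_degree_le_two n) hS
  rw [Fintype.card_fin] at this
  omega

def multiplesOfThree (n : ℕ) : Set (Fin n) :=
  {u | 3 ∣ u.val}

theorem ncard_multiplesOfThree (n : ℕ) : (multiplesOfThree n).ncard = (n + 2) / 3 := by
  have hrange : multiplesOfThree n =
      Set.range fun a : Fin ((n + 2) / 3) => (⟨3 * a, by omega⟩ : Fin n) := by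
    ext u
    refine ⟨fun ⟨a, ha⟩ => ⟨⟨a, by omega⟩, Fin.ext ha.symm⟩, ?_⟩
    rintro ⟨a, rfl⟩
    exact Nat.dvd_mul_right 3 a.val
  rw [hrange, Set.ncard_range_of_injective, Nat.card_eq_fintype_card, Fintype.card_fin]
  intro a b hab
  exact Fin.ext (by simpa using congrArg Fin.val hab)

theorem cycleGraph_dominated_by_multiplesOfThree (n : ℕ) :
    ∀ v ∉ multiplesOfThree n, ∃ u ∈ multiplesOfThree n, (cycleGraph n).Adj v u := by
  intro v hv
  rcases n with _ | _ | n
  · exact v.elim0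
  · exact (hv (by simp [multiplesOfThree, Fin.fin_one_eq_zero v])).elim
  have hv : ¬ 3 ∣ v.val := hv
  rcases (by omega : v.val % 3 = 1 ∨ v.val % 3 = 2) with h | h
  · have hv0 : v ≠ 0 := fun h0 => by simp [h0] at h
    refine ⟨v - 1, ?_, Or.inl (sub_sub_cancel v 1)⟩
    show 3 ∣ (v - 1).val
    rw [Fin.coe_sub_one, if_neg hv0]
    omega
  · refine ⟨v + 1, ?_, Or.inr (add_sub_cancel_left v 1)⟩
    show 3 ∣ (v + 1).val
    rw [Fin.val_add_one]
    split_ifs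
    · exact dvd_zero 3
    · omega

theorem stmt_6_general (n : ℕ) :
    qpNum (SimpleGraph.cycleGraph n) 2 = (n + 2) / 3 ∧
    domNum (SimpleGraph.cycleGraph n) = (n + 2) / 3 := by
  have hdom := cycleGraph_dominated_by_multiplesOfThree n
  have hqp := isQPDomSet_of_degree_le _ (cycleGraph_degree_le_two n) hdom
  have hcard := ncard_multiplesOfThree n
  constructor
  · refine IsLeast.csInf_eq ⟨⟨_, hqp, hcard⟩, ?_⟩
    rintro _ ⟨S, hS, rfl⟩
    exact div_three_le_ncard_of_dominates_cycleGraph hS.dominates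
  · refine IsLeast.csInf_eq ⟨⟨_, hdom, hcard⟩, ?_⟩
    rintro _ ⟨S, hS, rfl⟩
    exact div_three_le_ncard_of_dominates_cycleGraph hS

theorem stmt_6 (n : ℕ) (hn : 4 ≤ n) :
    qpNum (SimpleGraph.cycleGraph n) 2 = (n + 2) / 3 ∧
    domNum (SimpleGraph.cycleGraph n) = (n + 2) / 3 :=
  stmt_6_general n
end

section
/- For the path P_n with n ≥ 3, the perfect domination number γ_{11}(P_n) equals ⌈n/3⌉. -/
/-!
A perfect dominating set of `P_n` is in particular dominating, and each of its vertices dominates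
at most three vertices (itself and its two neighbours), so it has at least `n / 3` elements.
Conversely, a residue class mod `3`, chosen according to `n mod 3` so that both ends of the path
are dominated, is a perfect dominating set with `⌈n / 3⌉` elements.
-/

open Finset SimpleGraph

theorem Fin.card_filter_val_mod_eq {m r : ℕ} (n : ℕ) (hr : r < m) :
    #{i : Fin n | i.val % m = r} = n / m + if r < n % m then 1 else 0 := by
  have hcount : Nat.count (· % m = r) n = Nat.count (· ≡ r [MOD m]) n := by
    simp only [Nat.ModEq, Nat.mod_eq_of_lt hr]
  rw [card_filter, Fin.sum_univ_eq_sum_range (fun i => if i % m = r then 1 else 0), ← card_filter,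
    ← Nat.count_eq_card_filter_range, hcount, Nat.count_modEq_card n (by omega) r,
    Nat.mod_eq_of_lt hr]

namespace SimpleGraph

variable {V : Type*} {G : SimpleGraph V}

theorem IsPerfDomSet.exists_adj {S : Set V} (hS : IsPerfDomSet G S) {v : V} (hv : v ∉ S) :
    ∃ u ∈ S, G.Adj v u := by
  obtain ⟨u, hu⟩ := Set.ncard_eq_one.1 (hS v hv)
  have h : u ∈ S ∩ G.neighborSet v := hu ▸ rfl
  exact ⟨u, h.1, h.2⟩

theorem card_le_mul_card_of_forall_exists_adj [Fintype V] [DecidableEq V] [DecidableRel G.Adj]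
    {d : ℕ} (hdeg : ∀ v, G.degree v ≤ d) {S : Finset V} (hS : ∀ v ∉ S, ∃ u ∈ S, G.Adj v u) :
    Fintype.card V ≤ (d + 1) * #S := by
  have hcover : (univ : Finset V) ⊆ S.biUnion fun u => insert u (G.neighborFinset u) := by
    intro v _
    by_cases hv : v ∈ S
    · exact mem_biUnion.2 ⟨v, hv, mem_insert_self v _⟩
    · obtain ⟨u, hu, hvu⟩ := hS v hv
      exact mem_biUnion.2 ⟨u, hu, mem_insert_of_mem ((mem_neighborFinset ..).2 hvu.symm)⟩
  calc Fintype.card V ≤ #(S.biUnion fun u => insert u (G.neighborFinset u)) := card_le_card hcover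
    _ ≤ ∑ u ∈ S, #(insert u (G.neighborFinset u)) := card_biUnion_le
    _ ≤ ∑ _u ∈ S, (d + 1) :=
        sum_le_sum fun u _ => (card_insert_le _ _).trans (by simpa using hdeg u)
    _ = (d + 1) * #S := by rw [sum_const, smul_eq_mul, mul_comm]

theorem degree_pathGraph_le_two {n : ℕ} [DecidableRel (pathGraph n).Adj] (v : Fin n) :
    (pathGraph n).degree v ≤ 2 := by
  have himg : ((pathGraph n).neighborFinset v).image Fin.val ⊆ {v.val + 1, v.val - 1} := by
    intro x hx
    obtain ⟨u, hu, rfl⟩ := mem_image.1 hx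
    rw [mem_neighborFinset, pathGraph_adj] at hu
    simp only [mem_insert, mem_singleton]
    omega
  rw [← card_neighborFinset_eq_degree, ← card_image_of_injective _ Fin.val_injective]
  exact (card_le_card himg).trans card_le_two

theorem IsPerfDomSet.le_three_mul_ncard_pathGraph {n : ℕ} {S : Set (Fin n)}
    (hS : IsPerfDomSet (pathGraph n) S) : n ≤ 3 * S.ncard := by
  classical
  have := card_le_mul_card_of_forall_exists_adj degree_pathGraph_le_two (S := S.toFinset)
    fun v hv => by simpa using hS.exists_adj (by simpa using hv)
  simpa [Set.ncard_eq_toFinset_card'] using this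

/-- Every third vertex, starting at `1` so that vertex `0` is dominated, or at `0` when
`n ≡ 1 [MOD 3]` so that the last vertex `n - 1` is itself in the set. -/
def pathPerfDomSet (n : ℕ) : Finset (Fin n) :=
  {i | i.val % 3 = if n % 3 = 1 then 0 else 1}

theorem card_pathPerfDomSet (n : ℕ) : #(pathPerfDomSet n) = (n + 2) / 3 := by
  rw [pathPerfDomSet, Fin.card_filter_val_mod_eq n (by split <;> omega)]
  split <;> split <;> omega

theorem isPerfDomSet_pathPerfDomSet (n : ℕ) :
    IsPerfDomSet (pathGraph n) (pathPerfDomSet n : Set (Fin n)) := by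
  set r := if n % 3 = 1 then 0 else 1 with hr
  have hmem (x : Fin n) : x ∈ (pathPerfDomSet n : Set (Fin n)) ↔ x.val % 3 = r := by
    simp [pathPerfDomSet, hr]
  intro v hv
  have hrn : r ≠ n % 3 ∧ r ≤ 1 := by rw [hr]; split <;> omega
  rw [hmem] at hv
  -- `r ≠ n % 3` keeps `v + 1` inside the path when it lies in the class `r`, and `r ≤ 1` does the
  -- same for `v - 1`
  obtain ⟨u, hu, hur, hvu⟩ : ∃ u < n, u % 3 = r ∧ (v.val + 1 = u ∨ u + 1 = v.val) := by
    by_cases h : (v.val + 1) % 3 = r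
    · exact ⟨v.val + 1, by omega, h, .inl rfl⟩
    · exact ⟨v.val - 1, by omega, by omega, by omega⟩
  refine Set.ncard_eq_one.2 ⟨⟨u, hu⟩, Set.ext fun x => ?_⟩
  simp only [Set.mem_inter_iff, mem_neighborSet, pathGraph_adj, hmem, Set.mem_singleton_iff,
    Fin.ext_iff]
  omega

end SimpleGraph

theorem stmt_7_general (n : ℕ) :
    perfDomNum (SimpleGraph.pathGraph n) = (n + 2) / 3 := by
  have hupper : (n + 2) / 3 ∈ {m | ∃ S : Set (Fin n), IsPerfDomSet (pathGraph n) S ∧ S.ncard = m} :=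
    ⟨_, isPerfDomSet_pathPerfDomSet n, by rw [Set.ncard_coe_finset, card_pathPerfDomSet]⟩
  refine le_antisymm (Nat.sInf_le hupper) (le_csInf ⟨_, hupper⟩ ?_)
  rintro m ⟨S, hS, rfl⟩
  have := hS.le_three_mul_ncard_pathGraph
  omega

theorem stmt_7 (n : ℕ) (hn : 3 ≤ n) :
    perfDomNum (SimpleGraph.pathGraph n) = (n + 2) / 3 :=
  stmt_7_general n
end

section
/- If G is a graph with Δ(G) = 3 containing two vertices u, v of degree 2 at distance at least 2 joined by an induced path P all of whose internal vertices have degree 3 in G, then V(G) \ V(P) is a perfect dominating set, so γ_{11}(G) ≤ n − |V(P)| ≤ n − 3. -/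
/-! Since `P` is induced, a vertex of `P` has exactly `deg_G - deg_P` neighbours off `P`.
On a path this is `2 - 1` at the two ends and `3 - 2` at the internal vertices, so every vertex
of `P` has exactly one neighbour in `V(G) \ V(P)`. The size bound holds because
`|V(P)| = length P + 1 ≥ dist(u, v) + 1 ≥ 3`. -/

theorem perfDomNum_le_ncard {V : Type*} {G : SimpleGraph V} {S : Set V}
    (hS : IsPerfDomSet G S) : perfDomNum G ≤ S.ncard :=
  Nat.sInf_le ⟨S, hS, rfl⟩

namespace SimpleGraph.Walk

variable {V : Type*} {G : SimpleGraph V} {a b : V} {p : G.Walk a b}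

namespace IsPath

lemma ncard_support (hp : p.IsPath) : {x | x ∈ p.support}.ncard = p.length + 1 := by
  classical
  rw [← List.coe_toFinset, Set.ncard_coe_finset, List.toFinset_card_of_nodup hp.support_nodup,
    length_support]

lemma ncard_neighborSet_toSubgraph_start (hp : p.IsPath) (hab : a ≠ b) :
    (p.toSubgraph.neighborSet a).ncard = 1 := by
  rw [hp.neighborSet_toSubgraph_startpoint (not_nil_of_ne hab), Set.ncard_singleton]

lemma ncard_neighborSet_toSubgraph_end (hp : p.IsPath) (hab : a ≠ b) :
    (p.toSubgraph.neighborSet b).ncard = 1 := by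
  rw [hp.neighborSet_toSubgraph_endpoint (not_nil_of_ne hab), Set.ncard_singleton]

lemma ncard_neighborSet_toSubgraph_of_ne (hp : p.IsPath) {w : V} (hw : w ∈ p.support)
    (hwa : w ≠ a) (hwb : w ≠ b) : (p.toSubgraph.neighborSet w).ncard = 2 := by
  obtain ⟨i, rfl, hi⟩ := mem_support_iff_exists_getVert.mp hw
  have hi0 : i ≠ 0 := by rintro rfl; exact hwa p.getVert_zero
  have hilen : i ≠ p.length := by rintro rfl; exact hwb p.getVert_length
  exact hp.ncard_neighborSet_toSubgraph_internal_eq_two hi0 (by omega)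

end IsPath

theorem isPerfDomSet_compl_support
    (hind : ∀ x y, x ∈ p.support → y ∈ p.support → G.Adj x y → s(x, y) ∈ p.edges)
    (hdeg : ∀ w ∈ p.support,
      (G.neighborSet w).ncard = (p.toSubgraph.neighborSet w).ncard + 1) :
    IsPerfDomSet G (Set.univ \ {x | x ∈ p.support}) := by
  intro w hw
  replace hw : w ∈ p.support := by simpa using hw
  have houtside : (Set.univ \ {x | x ∈ p.support}) ∩ G.neighborSet w
      = G.neighborSet w \ p.toSubgraph.neighborSet w := by
    ext y
    simp only [Set.mem_inter_iff, Set.mem_sdiff, Set.mem_univ, true_and, Set.mem_ofPred_eq,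
      Subgraph.mem_neighborSet, adj_toSubgraph_iff_mem_edges, mem_neighborSet]
    exact ⟨fun ⟨hy, hadj⟩ => ⟨hadj, fun he => hy (p.snd_mem_support_of_mem_edges he)⟩,
      fun ⟨hadj, he⟩ => ⟨fun hy => he (hind w y hw hy hadj), hadj⟩⟩
  rw [houtside, Set.ncard_sdiff (p.toSubgraph.neighborSet_subset w) p.finite_neighborSet_toSubgraph,
    hdeg w hw]
  omega

end SimpleGraph.Walk

theorem stmt_12_general {V : Type*} [Fintype V] (G : SimpleGraph V)
    (u v : V) (hu : (G.neighborSet u).ncard = 2) (hv : (G.neighborSet v).ncard = 2)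
    (hdist : 2 ≤ G.dist u v)
    (p : G.Walk u v) (hp : p.IsPath)
    (hinduced : ∀ a b, a ∈ p.support → b ∈ p.support → G.Adj a b → s(a, b) ∈ p.edges)
    (hdeg : ∀ w ∈ p.support, w ≠ u → w ≠ v → (G.neighborSet w).ncard = 3) :
    IsPerfDomSet G (Set.univ \ {x | x ∈ p.support}) ∧
    perfDomNum G ≤ Fintype.card V - {x | x ∈ p.support}.ncard ∧
    Fintype.card V - {x | x ∈ p.support}.ncard ≤ Fintype.card V - 3 := by
  have huv : u ≠ v := by rintro rfl; simp at hdist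
  have hperf : IsPerfDomSet G (Set.univ \ {x | x ∈ p.support}) := by
    refine SimpleGraph.Walk.isPerfDomSet_compl_support hinduced fun w hw => ?_
    by_cases hwu : w = u
    · rw [hwu, hu, hp.ncard_neighborSet_toSubgraph_start huv]
    by_cases hwv : w = v
    · rw [hwv, hv, hp.ncard_neighborSet_toSubgraph_end huv]
    rw [hdeg w hw hwu hwv, hp.ncard_neighborSet_toSubgraph_of_ne hw hwu hwv]
  have hcompl : (Set.univ \ {x | x ∈ p.support}).ncard
      = Fintype.card V - {x | x ∈ p.support}.ncard := by
    rw [← Set.compl_eq_univ_sdiff, Set.ncard_compl, Nat.card_eq_fintype_card]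
  have hlen : 2 ≤ p.length := hdist.trans (G.dist_le p)
  refine ⟨hperf, hcompl ▸ perfDomNum_le_ncard hperf, ?_⟩
  rw [hp.ncard_support]
  omega

theorem stmt_12 {V : Type*} [Fintype V] (G : SimpleGraph V)
    (hconn : G.Connected) (hmax : maxDeg G = 3)
    (u v : V) (hu : (G.neighborSet u).ncard = 2) (hv : (G.neighborSet v).ncard = 2)
    (hdist : 2 ≤ G.dist u v)
    (p : G.Walk u v) (hp : p.IsPath)
    (hinduced : ∀ a b, a ∈ p.support → b ∈ p.support → G.Adj a b → s(a, b) ∈ p.edges)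
    (hdeg : ∀ w ∈ p.support, w ≠ u → w ≠ v → (G.neighborSet w).ncard = 3) :
    IsPerfDomSet G (Set.univ \ {x | x ∈ p.support}) ∧
    perfDomNum G ≤ Fintype.card V - {x | x ∈ p.support}.ncard ∧
    Fintype.card V - {x | x ∈ p.support}.ncard ≤ Fintype.card V - 3 :=
  stmt_12_general G u v hu hv hdist p hp hinduced hdeg
end

section
/- Every connected cubic graph G other than K_4 satisfies γ_{11}(G) ≤ n − 4, where n is the order of G. -/
/-!
If `T` induces a cycle of a cubic graph, every vertex of `T` has exactly one neighbour outside
`T`, so `Tᶜ` is a perfect dominating set. It therefore suffices to find an induced cycle of length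
at least `4`. Since `G` is connected and not `K₄`, some vertex has two non-adjacent neighbours,
giving an induced path on three vertices. Take an induced path `f 0, …, f (n - 1)` that cannot be
extended at `f 0`. Each of the two neighbours of `f 0` other than `f 1` is then adjacent to some
`f k` with `k ≥ 1`; if for one of them the least such `k` is at least `2`, we get an induced cycle
of length `k + 2 ≥ 4`, and otherwise `f 1` would have four neighbours.
-/

def seqCons {α : Type*} (a : α) (f : ℕ → α) : ℕ → α
  | 0 => a
  | k + 1 => f k

theorem isPerfDomSet_compl {V : Type*} {G : SimpleGraph V} {T : Set V}
    (hT : ∀ t ∈ T, (T ∩ G.neighborSet t).ncard + 1 = (G.neighborSet t).ncard) :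
    IsPerfDomSet G Tᶜ := by
  intro v hv
  rw [Set.notMem_compl_iff] at hv
  have hfin : (G.neighborSet v).Finite := Set.finite_of_ncard_pos (by rw [← hT v hv]; omega)
  have hcompl : Tᶜ ∩ G.neighborSet v = G.neighborSet v \ (T ∩ G.neighborSet v) := by
    ext; simp only [Set.mem_inter_iff, Set.mem_compl_iff, Set.mem_sdiff]; tauto
  rw [hcompl, Set.ncard_sdiff Set.inter_subset_right (hfin.subset Set.inter_subset_right),
    ← hT v hv]
  omega

namespace SimpleGraph

variable {V : Type*} {G : SimpleGraph V}

theorem Connected.eq_top_of_isClique_neighborSet (hconn : G.Connected)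
    (h : ∀ v, G.IsClique (G.neighborSet v)) : G = ⊤ := by
  have hwalk : ∀ x y (p : G.Walk x y), x = y ∨ G.Adj x y := by
    intro x y p
    induction p with
    | nil => exact Or.inl rfl
    | @cons x z y hxz _ ih =>
      rcases ih with rfl | hzy
      · exact Or.inr hxz
      · by_cases hxy : x = y
        · exact Or.inl hxy
        · exact Or.inr (h z hxz.symm hzy hxy)
  ext x y
  refine ⟨G.ne_of_adj, fun hxy => ?_⟩
  obtain ⟨p⟩ := hconn x y
  exact (hwalk x y p).resolve_left hxy

def IsInducedPath (G : SimpleGraph V) (n : ℕ) (f : ℕ → V) : Prop :=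
  Set.InjOn f (Set.Iio n) ∧ ∀ a < n, ∀ b < n, G.Adj (f a) (f b) ↔ a + 1 = b ∨ b + 1 = a

def IsInducedCycle (G : SimpleGraph V) (n : ℕ) (f : ℕ → V) : Prop :=
  Set.InjOn f (Set.Iio n) ∧ ∀ a < n, ∀ b < n,
    G.Adj (f a) (f b) ↔ a + 1 = b ∨ b + 1 = a ∨ a = 0 ∧ b + 1 = n ∨ b = 0 ∧ a + 1 = n

theorem IsInducedPath.le_card [Fintype V] {n : ℕ} {f : ℕ → V} (hf : G.IsInducedPath n f) :
    n ≤ Fintype.card V := by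
  have hinj : Function.Injective fun i : Fin n => f i :=
    fun a b hab => Fin.ext (hf.1 a.isLt b.isLt hab)
  simpa using Fintype.card_le_of_injective _ hinj

theorem IsInducedCycle.ncard_image {n : ℕ} {f : ℕ → V} (hf : G.IsInducedCycle n f) :
    (f '' Set.Iio n).ncard = n := by
  rw [hf.1.ncard_image, ← Finset.coe_Iio, Set.ncard_coe_finset, Nat.card_Iio]

theorem IsInducedCycle.ncard_image_inter_neighborSet {n m : ℕ} {f : ℕ → V}
    (hf : G.IsInducedCycle n f) (hn : 3 ≤ n) (hm : m < n) :
    (f '' Set.Iio n ∩ G.neighborSet (f m)).ncard = 2 := by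
  rw [← Set.image_inter_preimage,
    (hf.1.mono Set.inter_subset_left).ncard_image, Set.ncard_eq_two]
  refine ⟨if m = 0 then n - 1 else m - 1, if m + 1 = n then 0 else m + 1,
    by split_ifs <;> omega, ?_⟩
  ext a
  simp only [Set.mem_inter_iff, Set.mem_Iio, Set.mem_preimage, mem_neighborSet,
    Set.mem_insert_iff, Set.mem_singleton_iff]
  constructor
  · rintro ⟨ha, hadj⟩
    rw [hf.2 m hm a ha] at hadj
    split_ifs <;> omega
  · intro ha
    have ha' : a < n := by split_ifs at ha <;> omega
    refine ⟨ha', (hf.2 m hm a ha').2 ?_⟩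
    split_ifs at ha <;> omega

theorem IsInducedPath.ne_of_adj_zero {n k : ℕ} {f : ℕ → V} {u : V} (hf : G.IsInducedPath n f)
    (hu : G.Adj (f 0) u) (hu1 : u ≠ f 1) (hk : k < n) : u ≠ f k := by
  rintro rfl
  rcases (hf.2 0 (by omega) k hk).1 hu with h | h
  · exact hu1 (by rw [← h])
  · omega

theorem IsInducedPath.injOn_seqCons {n m : ℕ} {f : ℕ → V} {u : V} (hf : G.IsInducedPath n f)
    (hu : G.Adj (f 0) u) (hu1 : u ≠ f 1) (hm : m ≤ n) :
    Set.InjOn (seqCons u f) (Set.Iio (m + 1)) := by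
  rintro (_ | a) ha (_ | b) hb h <;> simp only [Set.mem_Iio] at ha hb <;> simp only [seqCons] at h
  · rfl
  · exact absurd h (hf.ne_of_adj_zero hu hu1 (by omega))
  · exact absurd h.symm (hf.ne_of_adj_zero hu hu1 (by omega))
  · rw [hf.1 (Set.mem_Iio.2 (by omega)) (Set.mem_Iio.2 (by omega)) h]

theorem IsInducedPath.isInducedPath_seqCons {n : ℕ} {f : ℕ → V} {u : V}
    (hf : G.IsInducedPath n f) (hu : G.Adj (f 0) u) (hu1 : u ≠ f 1)
    (hun : ∀ k, 1 ≤ k → k < n → ¬G.Adj u (f k)) :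
    G.IsInducedPath (n + 1) (seqCons u f) := by
  have hadj : ∀ k < n, G.Adj u (f k) ↔ k = 0 := fun k hk =>
    ⟨fun h => by by_contra h0; exact hun k (by omega) hk h, fun h => h ▸ hu.symm⟩
  refine ⟨hf.injOn_seqCons hu hu1 le_rfl, ?_⟩
  rintro (_ | a) ha (_ | b) hb <;> simp only [seqCons]
  · simp
  · rw [hadj b (by omega)]; omega
  · rw [G.adj_comm, hadj a (by omega)]; omega
  · rw [hf.2 a (by omega) b (by omega)]; omega

theorem IsInducedPath.isInducedCycle_seqCons {n i : ℕ} {f : ℕ → V} {u : V}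
    (hf : G.IsInducedPath n f) (hu : G.Adj (f 0) u) (hu1 : u ≠ f 1) (hi : 2 ≤ i) (hin : i < n)
    (hui : G.Adj u (f i)) (hmin : ∀ k, 1 ≤ k → k < i → ¬G.Adj u (f k)) :
    G.IsInducedCycle (i + 2) (seqCons u f) := by
  have hadj : ∀ k ≤ i, G.Adj u (f k) ↔ k = 0 ∨ k = i := fun k hk =>
    ⟨fun h => by by_contra h0; exact hmin k (by omega) (by omega) h,
      by rintro (rfl | rfl); exacts [hu.symm, hui]⟩
  refine ⟨hf.injOn_seqCons hu hu1 hin, ?_⟩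
  rintro (_ | a) ha (_ | b) hb <;> simp only [seqCons, true_and]
  · simp only [SimpleGraph.irrefl, false_iff]; omega
  · rw [hadj b (by omega)]; omega
  · rw [G.adj_comm, hadj a (by omega)]; omega
  · rw [hf.2 a (by omega) b (by omega)]; omega

theorem IsInducedPath.extend_or_cycle_or_adj_one {n : ℕ} {f : ℕ → V} {u : V}
    (hf : G.IsInducedPath n f) (hu : G.Adj (f 0) u) (hu1 : u ≠ f 1) :
    ((∃ g, G.IsInducedPath (n + 1) g) ∨ ∃ L, 4 ≤ L ∧ ∃ g, G.IsInducedCycle L g) ∨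
      G.Adj u (f 1) := by
  classical
  by_cases h : ∃ k, 1 ≤ k ∧ k < n ∧ G.Adj u (f k)
  · obtain ⟨h1, hn, hadj⟩ := Nat.find_spec h
    by_cases hone : Nat.find h = 1
    · exact Or.inr (hone ▸ hadj)
    · refine Or.inl (Or.inr ⟨_, ?_, _, hf.isInducedCycle_seqCons hu hu1 (by omega) hn hadj
        fun k hk1 hk => (Nat.find_min h hk ⟨hk1, by omega, ·⟩)⟩)
      omega
  · push Not at h
    exact Or.inl (Or.inl ⟨_, hf.isInducedPath_seqCons hu hu1 fun k hk1 hk => h k hk1 hk⟩)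

theorem IsInducedPath.extend_or_cycle {n : ℕ} {f : ℕ → V}
    (hcubic : ∀ v, (G.neighborSet v).ncard = 3) (hf : G.IsInducedPath n f) (hn : 3 ≤ n) :
    (∃ g, G.IsInducedPath (n + 1) g) ∨ ∃ L, 4 ≤ L ∧ ∃ g, G.IsInducedCycle L g := by
  have hf01 : G.Adj (f 0) (f 1) := (hf.2 0 (by omega) 1 (by omega)).2 (by omega)
  have hf12 : G.Adj (f 1) (f 2) := (hf.2 1 (by omega) 2 (by omega)).2 (by omega)
  have hf02 : ¬G.Adj (f 0) (f 2) := fun h => by have := (hf.2 0 (by omega) 2 (by omega)).1 h; omega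
  have hothers : (G.neighborSet (f 0) \ {f 1}).ncard = 2 := by
    rw [Set.ncard_sdiff (by simpa using hf01), hcubic, Set.ncard_singleton]
  obtain ⟨u, w, huw, hset⟩ := Set.ncard_eq_two.1 hothers
  have hu : u ∈ G.neighborSet (f 0) \ {f 1} := by simp [hset]
  have hw : w ∈ G.neighborSet (f 0) \ {f 1} := by simp [hset]
  obtain h | hu1 := hf.extend_or_cycle_or_adj_one hu.1 hu.2
  · exact h
  obtain h | hw1 := hf.extend_or_cycle_or_adj_one hw.1 hw.2
  · exact h
  -- otherwise `f 1` would have the four neighbours `f 0, f 2, u, w`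
  exfalso
  have hsub : ({f 0, f 2, u, w} : Set V) ⊆ G.neighborSet (f 1) := by
    rintro x (rfl | rfl | rfl | rfl)
    exacts [hf01.symm, hf12, hu1.symm, hw1.symm]
  have h02 : f 0 ≠ f 2 := fun h => by
    have := hf.1 (Set.mem_Iio.2 (by omega)) (Set.mem_Iio.2 (by omega)) h
    omega
  have hu2 : u ≠ f 2 := by rintro rfl; exact hf02 hu.1
  have hw2 : w ≠ f 2 := by rintro rfl; exact hf02 hw.1
  have hcard := Set.ncard_le_ncard hsub (Set.finite_of_ncard_pos (by rw [hcubic]; omega))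
  rw [Set.ncard_insert_of_notMem (by simp [h02, (G.ne_of_adj hu.1), (G.ne_of_adj hw.1)]),
    Set.ncard_insert_of_notMem (by simp [hu2.symm, hw2.symm]),
    Set.ncard_pair huw, hcubic] at hcard
  omega

theorem exists_isInducedCycle_of_isInducedPath [Finite V] {f : ℕ → V}
    (hcubic : ∀ v, (G.neighborSet v).ncard = 3) (hf : G.IsInducedPath 3 f) :
    ∃ L, 4 ≤ L ∧ ∃ g, G.IsInducedCycle L g := by
  have := Fintype.ofFinite V
  by_contra hno
  have hlong : ∀ k, ∃ g, G.IsInducedPath (k + 3) g := by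
    intro k
    induction k with
    | zero => exact ⟨f, hf⟩
    | succ k ih =>
      obtain ⟨g, hg⟩ := ih
      exact (hg.extend_or_cycle hcubic (by omega)).resolve_right hno
  obtain ⟨g, hg⟩ := hlong (Fintype.card V)
  have := hg.le_card
  omega

theorem isInducedPath_three {v a b : V} (hva : G.Adj v a) (hvb : G.Adj v b) (hab : a ≠ b)
    (hnab : ¬G.Adj a b) : G.IsInducedPath 3 (seqCons a (seqCons v fun _ => b)) := by
  have hav : a ≠ v := (G.ne_of_adj hva).symm
  have hvb' : v ≠ b := G.ne_of_adj hvb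
  refine ⟨fun i hi j hj h => ?_, fun i hi j hj => ?_⟩
  · simp only [Set.mem_Iio] at hi hj
    interval_cases i <;> interval_cases j <;> simp_all [seqCons]
  · interval_cases i <;> interval_cases j <;> simp_all [seqCons, G.adj_comm]

theorem exists_isInducedPath_three [Finite V] (hconn : G.Connected)
    (hcubic : ∀ v, (G.neighborSet v).ncard = 3)
    (hK4 : IsEmpty (G ≃g (⊤ : SimpleGraph (Fin 4)))) : ∃ f, G.IsInducedPath 3 f := by
  by_contra hno
  have hclique : ∀ v, G.IsClique (G.neighborSet v) := fun _ _ hva _ hvb hab =>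
    by_contra fun hnab => hno ⟨_, isInducedPath_three hva hvb hab hnab⟩
  obtain ⟨v⟩ := hconn.nonempty
  obtain rfl := hconn.eq_top_of_isClique_neighborSet hclique
  have := Fintype.ofFinite V
  have hcard : Fintype.card V = 4 := by
    have := hcubic v
    rw [neighborSet_top, Set.ncard_compl, Set.ncard_singleton, Nat.card_eq_fintype_card] at this
    omega
  exact hK4.false (Iso.completeGraph (Fintype.equivFinOfCardEq hcard))

end SimpleGraph

theorem stmt_14 {V : Type*} [Fintype V] (G : SimpleGraph V)
    (hconn : G.Connected) (hcubic : ∀ v : V, (G.neighborSet v).ncard = 3)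
    (hK4 : IsEmpty (G ≃g (⊤ : SimpleGraph (Fin 4)))) :
    perfDomNum G ≤ Fintype.card V - 4 := by
  obtain ⟨f, hf⟩ := G.exists_isInducedPath_three hconn hcubic hK4
  obtain ⟨L, hL, g, hg⟩ := G.exists_isInducedCycle_of_isInducedPath hcubic hf
  have hdom : IsPerfDomSet G (g '' Set.Iio L)ᶜ := isPerfDomSet_compl <| by
    rintro _ ⟨m, hm, rfl⟩
    rw [hg.ncard_image_inter_neighborSet (by omega) hm, hcubic]
  calc perfDomNum G ≤ (g '' Set.Iio L)ᶜ.ncard := Nat.sInf_le ⟨_, hdom, rfl⟩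
    _ = Fintype.card V - L := by rw [Set.ncard_compl, hg.ncard_image, Nat.card_eq_fintype_card]
    _ ≤ Fintype.card V - 4 := by omega
end

section
/- Every tree T of order n ≥ 7 with maximum degree Δ(T) = 3 satisfies γ_{11}(T) ≤ n − 4. -/
/-! If every vertex of a set `A` has exactly one neighbour outside `A`, then `Aᶜ` is a perfect
dominating set, so it suffices to find such a set `A` with at least four vertices. By the handshake
lemma, a tree with all degrees at most 3 has exactly two more leaves than vertices of degree 3. If
there are at least four leaves, the set of all leaves will do. Otherwise the tree is a spider: one
vertex `c` of degree 3 with three legs. If some leg contains two adjacent vertices of degree 2, take them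
together with two leaves that are not their neighbours. If not, `n ≥ 7` forces all three legs to
have length 2, and then `c`, two of its neighbours and the leaf of the third leg work. -/

open Finset

namespace SimpleGraph

variable {V : Type*} {G : SimpleGraph V}

lemma isPerfDomSet_compl {A : Set V} (hA : ∀ v ∈ A, ∃ w, G.neighborSet v \ A = {w}) :
    IsPerfDomSet G Aᶜ := by
  intro v hv
  obtain ⟨w, hw⟩ := hA v (compl_compl A ▸ hv)
  rw [Set.inter_comm, ← Set.sdiff_eq, hw, Set.ncard_singleton]

lemma perfDomNum_le_card_sub_ncard [Fintype V] {A : Set V}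
    (hA : ∀ v ∈ A, ∃ w, G.neighborSet v \ A = {w}) :
    perfDomNum G ≤ Fintype.card V - A.ncard := by
  rw [← Nat.card_eq_fintype_card, ← Set.ncard_compl]
  exact Nat.sInf_le ⟨Aᶜ, isPerfDomSet_compl hA, rfl⟩

lemma neighborSet_diff_eq_singleton {A B : Set V} {v w : V}
    (hN : G.neighborSet v = insert w B) (hB : B ⊆ A) (hw : w ∉ A) :
    G.neighborSet v \ A = {w} := by
  rw [hN, Set.insert_sdiff_of_notMem _ hw, Set.sdiff_eq_empty.mpr hB, insert_empty_eq]

lemma Connected.eq_univ_of_neighborSet_subset (hG : G.Connected) {S : Set V} {x : V}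
    (hx : x ∈ S) (hS : ∀ a ∈ S, G.neighborSet a ⊆ S) : S = Set.univ := by
  refine Set.eq_univ_of_forall fun y => by_contra fun hy => ?_
  obtain ⟨d, -, hd, hd'⟩ := (hG.preconnected x y).some.exists_boundary_dart S hx hy
  exact hd' (hS _ hd d.adj)

section Finite

variable [Fintype V]

lemma Connected.card_le_card_of_neighborSet_subset (hG : G.Connected) {S : Finset V} {x : V}
    (hx : x ∈ S) (hS : ∀ a ∈ S, G.neighborSet a ⊆ S) : Fintype.card V ≤ #S := by
  classical
  rw [Finset.coe_eq_univ.mp (hG.eq_univ_of_neighborSet_subset hx hS), Finset.card_univ]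

variable [DecidableRel G.Adj]

lemma ncard_neighborSet_eq_degree (v : V) : (G.neighborSet v).ncard = G.degree v := by
  rw [← Nat.card_coe_set_eq, Nat.card_eq_fintype_card, card_neighborSet_eq_degree]

lemma maxDeg_eq_maxDegree : maxDeg G = G.maxDegree := by
  rcases isEmpty_or_nonempty V with hV | hV
  · simp [maxDeg, maxDegree_of_subsingleton]
  · obtain ⟨v, hv⟩ := G.exists_maximal_degree_vertex
    refine IsGreatest.csSup_eq ⟨⟨v, by rw [hv, ncard_neighborSet_eq_degree]⟩, ?_⟩
    rintro _ ⟨w, rfl⟩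
    rw [ncard_neighborSet_eq_degree]
    exact G.degree_le_maxDegree w

lemma neighborSet_eq_singleton_of_degree_eq_one {x z : V} (hx : G.degree x = 1)
    (hxz : G.Adj x z) : G.neighborSet x = {z} := by
  obtain ⟨y, hy⟩ := Set.ncard_eq_one.mp ((ncard_neighborSet_eq_degree x).trans hx)
  have hzy : z ∈ ({y} : Set V) := hy ▸ hxz
  rwa [Set.mem_singleton_iff.mp hzy]

lemma exists_neighborSet_eq_pair_of_degree_eq_two {u v : V} (hu : G.degree u = 2)
    (huv : G.Adj u v) : ∃ p, p ≠ v ∧ G.neighborSet u = {p, v} := by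
  obtain ⟨a, b, hab, hN⟩ := Set.ncard_eq_two.mp ((ncard_neighborSet_eq_degree u).trans hu)
  have hv : v ∈ ({a, b} : Set V) := hN ▸ huv
  rcases hv with rfl | rfl
  · exact ⟨b, hab.symm, hN.trans (Set.pair_comm _ _)⟩
  · exact ⟨a, hab, hN⟩

lemma Connected.not_adj_of_degree_eq_one (hG : G.Connected) (hn : 3 ≤ Fintype.card V)
    {x y : V} (hx : G.degree x = 1) (hy : G.degree y = 1) : ¬G.Adj x y := by
  classical
  intro hxy
  have hS : ∀ a ∈ ({x, y} : Finset V), G.neighborSet a ⊆ ({x, y} : Finset V) := by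
    simp only [Finset.mem_insert, Finset.mem_singleton, Finset.coe_insert, Finset.coe_singleton]
    rintro a (rfl | rfl)
    · simp [neighborSet_eq_singleton_of_degree_eq_one hx hxy]
    · simp [neighborSet_eq_singleton_of_degree_eq_one hy hxy.symm]
  have := hG.card_le_card_of_neighborSet_subset (Finset.mem_insert_self x _) hS
  have := Finset.card_le_two (a := x) (b := y)
  omega

lemma Connected.perfDomNum_le_card_sub_card_leaves (hG : G.Connected)
    (hn : 3 ≤ Fintype.card V) :
    perfDomNum G ≤ Fintype.card V - #{v | G.degree v = 1} := by
  rw [← Set.ncard_coe_finset]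
  refine perfDomNum_le_card_sub_ncard fun x hx => ?_
  simp only [coe_filter, Finset.mem_univ, true_and, Set.mem_ofPred_eq] at hx ⊢
  obtain ⟨z, hxz⟩ := (G.degree_pos_iff_exists_adj x).mp (by omega)
  refine ⟨z, neighborSet_diff_eq_singleton (B := ∅) ?_ (Set.empty_subset _) ?_⟩
  · rw [insert_empty_eq]
    exact neighborSet_eq_singleton_of_degree_eq_one hx hxz
  · exact fun hz => hG.not_adj_of_degree_eq_one hn hx hz hxz

lemma IsTree.card_leaves_eq_card_degree_three_add_two [Nontrivial V] (hG : G.IsTree)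
    (hdeg : ∀ v, G.degree v ≤ 3) :
    #{v | G.degree v = 1} = #{v | G.degree v = 3} + 2 := by
  have hsum : ∑ v, (G.degree v : ℤ) = 2 * Fintype.card V - 2 := by
    have := hG.card_edgeFinset
    rw [← Nat.cast_sum, G.sum_degrees_eq_twice_card_edges]
    omega
  have hpt (v : V) : (G.degree v : ℤ) - 2 =
      (if G.degree v = 3 then 1 else 0) - (if G.degree v = 1 then 1 else 0) := by
    have := hG.connected.preconnected.degree_pos_of_nontrivial v
    have := hdeg v
    split_ifs <;> omega
  have := Finset.sum_congr rfl fun v (_ : v ∈ univ) => hpt v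
  rw [Finset.sum_sub_distrib, Finset.sum_sub_distrib, Finset.sum_boole, Finset.sum_boole,
    hsum] at this
  simp only [sum_const, card_univ, Int.nsmul_eq_mul] at this
  omega

lemma card_degree_eq_one_add_two_add_three (hpos : ∀ v, 0 < G.degree v)
    (hdeg : ∀ v, G.degree v ≤ 3) :
    #{v | G.degree v = 1} + #{v | G.degree v = 2} + #{v | G.degree v = 3} = Fintype.card V := by
  rw [Finset.card_filter, Finset.card_filter, Finset.card_filter, ← Finset.sum_add_distrib,
    ← Finset.sum_add_distrib, ← Finset.card_univ, Finset.card_eq_sum_ones]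
  refine Finset.sum_congr rfl fun v _ => ?_
  have := hpos v
  have := hdeg v
  split_ifs <;> omega

lemma Connected.perfDomNum_le_card_sub_four_of_adj_degree_two (hG : G.Connected)
    (hn : 5 ≤ Fintype.card V) (hL : 3 ≤ #{v | G.degree v = 1}) {u v : V} (huv : G.Adj u v)
    (hu : G.degree u = 2) (hv : G.degree v = 2) : perfDomNum G ≤ Fintype.card V - 4 := by
  classical
  obtain ⟨p, hpv, hNu⟩ := exists_neighborSet_eq_pair_of_degree_eq_two hu huv
  obtain ⟨q, hqu, hNv⟩ := exists_neighborSet_eq_pair_of_degree_eq_two hv huv.symm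
  have hup : G.Adj u p := by simp [← mem_neighborSet, hNu]
  have hvq : G.Adj v q := by simp [← mem_neighborSet, hNv]
  -- otherwise `{u, v, p, q}` would be the whole tree
  have hpq : G.degree p ≠ 1 ∨ G.degree q ≠ 1 := by
    by_contra! h
    have hS : ∀ a ∈ ({u, v, p, q} : Finset V),
        G.neighborSet a ⊆ ({u, v, p, q} : Finset V) := by
      simp only [Finset.mem_insert, Finset.mem_singleton, Finset.coe_insert, Finset.coe_singleton]
      rintro a (rfl | rfl | rfl | rfl)
      · simp [hNu, Set.insert_subset_iff]
      · simp [hNv, Set.insert_subset_iff]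
      · simp [neighborSet_eq_singleton_of_degree_eq_one h.1 hup.symm]
      · simp [neighborSet_eq_singleton_of_degree_eq_one h.2 hvq.symm]
    have := hG.card_le_card_of_neighborSet_subset (Finset.mem_insert_self u _) hS
    have := Finset.card_le_four (a := u) (b := v) (c := p) (d := q)
    omega
  wlog hq : G.degree q ≠ 1 generalizing u v p q
  · exact this huv.symm hv hu q hqu hNv p hpv hNu hvq hup hpq.symm (hpq.resolve_right hq)
  obtain ⟨x, hx, y, hy, hxy⟩ := Finset.one_lt_card.mp <|
    (Finset.pred_card_le_card_erase (s := {v | G.degree v = 1}) (a := p)).trans_lt' (by omega)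
  simp only [Finset.mem_erase, Finset.mem_filter, Finset.mem_univ, true_and] at hx hy
  have hleaf (x y : V) (hxp : x ≠ p) (hx : G.degree x = 1) (hy : G.degree y = 1) :
      ∃ w, G.neighborSet x \ {u, v, x, y} = {w} := by
    obtain ⟨z, hxz⟩ := (G.degree_pos_iff_exists_adj x).mp (by omega)
    refine ⟨z, neighborSet_diff_eq_singleton (B := ∅) ?_ (Set.empty_subset _) ?_⟩
    · rw [insert_empty_eq]
      exact neighborSet_eq_singleton_of_degree_eq_one hx hxz
    simp only [Set.mem_insert_iff, Set.mem_singleton_iff, not_or]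
    refine ⟨?_, ?_, hxz.ne', ?_⟩
    · intro hzu
      have : x ∈ ({p, v} : Set V) := hNu ▸ hzu ▸ hxz.symm
      rcases this with rfl | rfl
      exacts [hxp rfl, by omega]
    · intro hzv
      have : x ∈ ({q, u} : Set V) := hNv ▸ hzv ▸ hxz.symm
      rcases this with rfl | rfl
      exacts [hq hx, by omega]
    · rintro rfl
      exact hG.not_adj_of_degree_eq_one (by omega) hx hy hxz
  refine (perfDomNum_le_card_sub_ncard (A := {u, v, x, y}) ?_).trans_eq ?_
  · rintro a (rfl | rfl | rfl | rfl)
    · refine ⟨p, neighborSet_diff_eq_singleton hNu (by simp) ?_⟩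
      simp only [Set.mem_insert_iff, Set.mem_singleton_iff, not_or]
      exact ⟨hup.ne', hpv, Ne.symm hx.1, Ne.symm hy.1⟩
    · refine ⟨q, neighborSet_diff_eq_singleton hNv (by simp) ?_⟩
      simp only [Set.mem_insert_iff, Set.mem_singleton_iff, not_or]
      exact ⟨hqu, hvq.ne', ne_of_apply_ne (G.degree ·) (by omega),
        ne_of_apply_ne (G.degree ·) (by omega)⟩
    · exact hleaf a y hx.1 hx.2 hy.2
    · rw [Set.pair_comm]
      exact hleaf a x hy.1 hy.2 hx.2
  · have : u ≠ x := ne_of_apply_ne (G.degree ·) (by omega)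
    have : u ≠ y := ne_of_apply_ne (G.degree ·) (by omega)
    have : v ≠ x := ne_of_apply_ne (G.degree ·) (by omega)
    have : v ≠ y := ne_of_apply_ne (G.degree ·) (by omega)
    simp [Set.ncard_insert_of_notMem, huv.ne, *]

lemma Connected.perfDomNum_le_card_sub_four_of_unique_degree_three (hG : G.Connected)
    (hn : 4 ≤ Fintype.card V) (hdeg : ∀ v, G.degree v ≤ 3) {c : V}
    (hc : ∀ v, G.degree v = 3 ↔ v = c) (hT2 : 3 ≤ #{v | G.degree v = 2})
    (hpair : ∀ u v, G.Adj u v → G.degree u = 2 → G.degree v ≠ 2) :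
    perfDomNum G ≤ Fintype.card V - 4 := by
  classical
  have : Nontrivial V := Fintype.one_lt_card_iff_nontrivial.mp (by omega)
  have hpos (v : V) : 0 < G.degree v := hG.preconnected.degree_pos_of_nontrivial v
  have hleaf_of_ne {u v : V} (huv : G.Adj u v) (hu : G.degree u = 2) (hvc : v ≠ c) :
      G.degree v = 1 := by
    have := hpos v
    have := hdeg v
    have := hpair u v huv hu
    have := mt (hc v).mp hvc
    omega
  -- a vertex of degree 2 with two leaf neighbours would span the whole tree
  have hc_adj (v : V) (hv : G.degree v = 2) : G.Adj c v := by
    obtain ⟨z, w, -, hN⟩ := Set.ncard_eq_two.mp ((ncard_neighborSet_eq_degree v).trans hv)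
    have hvz : G.Adj v z := by simp [← mem_neighborSet, hN]
    have hvw : G.Adj v w := by simp [← mem_neighborSet, hN]
    by_cases hzc : z = c
    · exact hzc ▸ hvz.symm
    by_contra hwc
    replace hwc : w ≠ c := fun h => hwc (h ▸ hvw.symm)
    have hS : ∀ a ∈ ({v, z, w} : Finset V), G.neighborSet a ⊆ ({v, z, w} : Finset V) := by
      simp only [Finset.mem_insert, Finset.mem_singleton, Finset.coe_insert, Finset.coe_singleton]
      rintro a (rfl | rfl | rfl)
      · simp [hN]
      · simp [neighborSet_eq_singleton_of_degree_eq_one (hleaf_of_ne hvz hv hzc) hvz.symm]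
      · simp [neighborSet_eq_singleton_of_degree_eq_one (hleaf_of_ne hvw hv hwc) hvw.symm]
    have := hG.card_le_card_of_neighborSet_subset (Finset.mem_insert_self v _) hS
    have := Finset.card_le_three (a := v) (b := z) (c := w)
    omega
  -- so the at least three vertices of degree 2 fill up the three neighbours of `c`
  have hdeg_nbr (m : V) (hm : G.Adj c m) : G.degree m = 2 := by
    have hsub : ({v | G.degree v = 2} : Finset V) ⊆ G.neighborFinset c := fun v hv => by
      simpa using hc_adj v (by simpa using hv)
    have hcard : #(G.neighborFinset c) ≤ #{v | G.degree v = 2} := by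
      rw [card_neighborFinset_eq_degree, (hc c).mpr rfl]
      exact hT2
    have hm' : m ∈ ({v | G.degree v = 2} : Finset V) :=
      Finset.eq_of_subset_of_card_le hsub hcard ▸ (mem_neighborFinset _ _ _).mpr hm
    simpa using hm'
  obtain ⟨m₃, m₁, m₂, h₃₁, h₃₂, h₁₂, hNc⟩ :=
    Set.ncard_eq_three.mp ((ncard_neighborSet_eq_degree c).trans ((hc c).mpr rfl))
  have hcm₁ : G.Adj c m₁ := by simp [← mem_neighborSet, hNc]
  have hcm₂ : G.Adj c m₂ := by simp [← mem_neighborSet, hNc]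
  have hcm₃ : G.Adj c m₃ := by simp [← mem_neighborSet, hNc]
  obtain ⟨l, hlc, hNm₃⟩ :=
    exists_neighborSet_eq_pair_of_degree_eq_two (hdeg_nbr m₃ hcm₃) hcm₃.symm
  have hm₃l : G.Adj m₃ l := by simp [← mem_neighborSet, hNm₃]
  have hl : G.degree l = 1 := hleaf_of_ne hm₃l (hdeg_nbr m₃ hcm₃) hlc
  have hNl := neighborSet_eq_singleton_of_degree_eq_one hl hm₃l.symm
  have hbranch (m m' : V) (hm : G.Adj c m) (hm' : G.Adj c m') (hm₃ : m ≠ m₃) :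
      ∃ w, G.neighborSet m \ {c, m, m', l} = {w} := by
    obtain ⟨z, hzc, hNm⟩ := exists_neighborSet_eq_pair_of_degree_eq_two (hdeg_nbr m hm) hm.symm
    have hmz : G.Adj m z := by simp [← mem_neighborSet, hNm]
    refine ⟨z, neighborSet_diff_eq_singleton hNm (by simp) ?_⟩
    simp only [Set.mem_insert_iff, Set.mem_singleton_iff, not_or]
    refine ⟨hzc, hmz.ne', ?_, ?_⟩
    · rintro rfl
      exact hpair m z hmz (hdeg_nbr m hm) (hdeg_nbr z hm')
    · rintro rfl
      have : m ∈ G.neighborSet z := hmz.symm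
      exact hm₃ (by rwa [hNl] at this)
  refine (perfDomNum_le_card_sub_ncard (A := {c, m₁, m₂, l}) ?_).trans_eq ?_
  · have hm₃ : m₃ ∉ ({c, m₁, m₂, l} : Set V) := by
      simp only [Set.mem_insert_iff, Set.mem_singleton_iff, not_or]
      exact ⟨hcm₃.ne', h₃₁, h₃₂, hm₃l.ne⟩
    rintro a (rfl | rfl | rfl | rfl)
    · exact ⟨m₃, neighborSet_diff_eq_singleton hNc (by simp [Set.insert_subset_iff]) hm₃⟩
    · exact hbranch a m₂ hcm₁ hcm₂ h₃₁.symm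
    · rw [Set.insert_comm m₁ a]
      exact hbranch a m₁ hcm₂ hcm₁ h₃₂.symm
    · exact ⟨m₃, neighborSet_diff_eq_singleton (B := ∅) (by rw [insert_empty_eq, hNl])
        (Set.empty_subset _) hm₃⟩
  · have : m₁ ≠ l := ne_of_apply_ne (G.degree ·) (by simp [hdeg_nbr m₁ hcm₁, hl])
    have : m₂ ≠ l := ne_of_apply_ne (G.degree ·) (by simp [hdeg_nbr m₂ hcm₂, hl])
    simp [Set.ncard_insert_of_notMem, hcm₁.ne, hcm₂.ne, hlc.symm, *]

end Finite

end SimpleGraph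

theorem stmt_15 {V : Type*} [Fintype V] (G : SimpleGraph V)
    (htree : G.IsTree) (hn : 7 ≤ Fintype.card V) (hmax : maxDeg G = 3) :
    perfDomNum G ≤ Fintype.card V - 4 := by
  classical
  have : Nontrivial V := Fintype.one_lt_card_iff_nontrivial.mp (by omega)
  have hG := htree.connected
  rw [SimpleGraph.maxDeg_eq_maxDegree] at hmax
  have hdeg (v : V) : G.degree v ≤ 3 := hmax ▸ G.degree_le_maxDegree v
  obtain ⟨c, hc⟩ := G.exists_maximal_degree_vertex
  have hleaves := htree.card_leaves_eq_card_degree_three_add_two hdeg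
  by_cases h4 : 4 ≤ #{v | G.degree v = 1}
  · exact (hG.perfDomNum_le_card_sub_card_leaves (by omega)).trans (by omega)
  have hT3 : #{v | G.degree v = 3} = 1 :=
    le_antisymm (by omega) (Finset.card_pos.mpr ⟨c, by simp [← hc, hmax]⟩)
  obtain ⟨c', hc'⟩ := Finset.card_eq_one.mp hT3
  by_cases hpair : ∃ u v, G.Adj u v ∧ G.degree u = 2 ∧ G.degree v = 2
  · obtain ⟨u, v, huv, hu, hv⟩ := hpair
    exact hG.perfDomNum_le_card_sub_four_of_adj_degree_two (by omega) (by omega) huv hu hv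
  have := SimpleGraph.card_degree_eq_one_add_two_add_three
    (hG.preconnected.degree_pos_of_nontrivial ·) hdeg
  exact hG.perfDomNum_le_card_sub_four_of_unique_degree_three (by omega) hdeg
    (fun v => by simpa using Finset.ext_iff.mp hc' v) (by omega)
    fun u v huv hu hv => hpair ⟨u, v, huv, hu, hv⟩
end

section
/- Let G = G_1 ∨ G_2 be the join of two graphs. Then γ_{11}(G) = 1 if and only if G_1 or G_2 has a universal vertex. -/
/-- The join `G₁ ∨ G₂`: disjoint union plus all edges between the two parts. -/
def joinG {α β : Type*} (G₁ : SimpleGraph α) (G₂ : SimpleGraph β) : SimpleGraph (α ⊕ β) :=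
  SimpleGraph.fromRel (fun u v =>
    match u, v with
    | Sum.inl a, Sum.inl b => G₁.Adj a b
    | Sum.inr a, Sum.inr b => G₂.Adj a b
    | _, _ => True)


/-!
A singleton `{x}` is a perfect dominating set exactly when `x` is universal, so `γ₁₁(G) = 1`
says precisely that `G` has a universal vertex. In a join every vertex of `G₁` already sees all of `G₂`, so it is universal in `G₁ ∨ G₂`
iff it is universal in `G₁`, and symmetrically for `G₂`.
-/

theorem Set.ncard_singleton_inter_eq_one_iff {V : Type*} (a : V) (s : Set V) :
    ({a} ∩ s).ncard = 1 ↔ a ∈ s := by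
  by_cases ha : a ∈ s <;> simp [ha]

theorem SimpleGraph.isUniversal_iff_forall_ne_imp_adj {V : Type*} (G : SimpleGraph V) (x : V) :
    G.IsUniversal x ↔ ∀ v, v ≠ x → G.Adj x v :=
  forall_congr' fun _ => imp_congr_left ne_comm

section PerfectDomination

variable {V : Type*} {G : SimpleGraph V}

theorem isPerfDomSet_singleton_iff {x : V} : IsPerfDomSet G {x} ↔ G.IsUniversal x := by
  simp only [IsPerfDomSet, Set.ncard_singleton_inter_eq_one_iff, Set.mem_singleton_iff,
    SimpleGraph.mem_neighborSet, G.isUniversal_iff_forall_ne_imp_adj, G.adj_comm]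

theorem IsPerfDomSet.nonempty [Nonempty V] {S : Set V} (hS : IsPerfDomSet G S) : S.Nonempty := by
  by_contra hempty
  simpa [Set.not_nonempty_iff_eq_empty.mp hempty] using hS (Classical.arbitrary V)

/-- On an infinite vertex type `Set.univ` is a perfect dominating set of `ncard` zero, hence the
finiteness assumption. -/
theorem perfDomNum_eq_one_iff [Finite V] : perfDomNum G = 1 ↔ ∃ x, G.IsUniversal x := by
  constructor
  · intro h
    rw [perfDomNum] at h
    have hmem : 1 ∈ {m | ∃ S : Set V, IsPerfDomSet G S ∧ S.ncard = m} :=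
      h ▸ Nat.sInf_mem (Nat.nonempty_of_pos_sInf (by rw [h]; exact Nat.one_pos))
    obtain ⟨S, hS, hcard⟩ := hmem
    obtain ⟨x, rfl⟩ := Set.ncard_eq_one.mp hcard
    exact ⟨x, isPerfDomSet_singleton_iff.mp hS⟩
  · rintro ⟨x, hx⟩
    have : Nonempty V := ⟨x⟩
    have hx_mem : 1 ∈ {m | ∃ S : Set V, IsPerfDomSet G S ∧ S.ncard = m} :=
      ⟨{x}, isPerfDomSet_singleton_iff.mpr hx, Set.ncard_singleton x⟩
    refine le_antisymm (Nat.sInf_le hx_mem) (le_csInf ⟨1, hx_mem⟩ ?_)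
    rintro _ ⟨S, hS, rfl⟩
    exact (Set.ncard_pos).mpr hS.nonempty

end PerfectDomination

section Join

variable {α β : Type*} {G₁ : SimpleGraph α} {G₂ : SimpleGraph β}

@[simp] theorem joinG_adj_inl_inl {a b : α} :
    (joinG G₁ G₂).Adj (.inl a) (.inl b) ↔ G₁.Adj a b := by
  simp only [joinG, SimpleGraph.fromRel_adj, ne_eq, Sum.inl.injEq, G₁.adj_comm b a, or_self,
    and_iff_right_iff_imp]
  exact G₁.ne_of_adj

@[simp] theorem joinG_adj_inr_inr {a b : β} :
    (joinG G₁ G₂).Adj (.inr a) (.inr b) ↔ G₂.Adj a b := by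
  simp only [joinG, SimpleGraph.fromRel_adj, ne_eq, Sum.inr.injEq, G₂.adj_comm b a, or_self,
    and_iff_right_iff_imp]
  exact G₂.ne_of_adj

@[simp] theorem joinG_adj_inl_inr (a : α) (b : β) : (joinG G₁ G₂).Adj (.inl a) (.inr b) := by
  simp [joinG]

@[simp] theorem joinG_adj_inr_inl (a : β) (b : α) : (joinG G₁ G₂).Adj (.inr a) (.inl b) := by
  simp [joinG]

theorem isUniversal_inl_joinG_iff {u : α} :
    (joinG G₁ G₂).IsUniversal (.inl u) ↔ G₁.IsUniversal u := by
  refine ⟨fun h w hw => joinG_adj_inl_inl.mp (h (by simpa using hw)), fun h => ?_⟩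
  rintro (w | w) hw
  · exact joinG_adj_inl_inl.mpr (h (by simpa using hw))
  · exact joinG_adj_inl_inr u w

theorem isUniversal_inr_joinG_iff {u : β} :
    (joinG G₁ G₂).IsUniversal (.inr u) ↔ G₂.IsUniversal u := by
  refine ⟨fun h w hw => joinG_adj_inr_inr.mp (h (by simpa using hw)), fun h => ?_⟩
  rintro (w | w) hw
  · exact joinG_adj_inr_inl u w
  · exact joinG_adj_inr_inr.mpr (h (by simpa using hw))

theorem exists_isUniversal_joinG_iff :
    (∃ x, (joinG G₁ G₂).IsUniversal x) ↔ (∃ u, G₁.IsUniversal u) ∨ ∃ u, G₂.IsUniversal u := by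
  simp only [Sum.exists, isUniversal_inl_joinG_iff, isUniversal_inr_joinG_iff]

end Join

theorem stmt_16 {α β : Type*} [Fintype α] [Fintype β]
    (G₁ : SimpleGraph α) (G₂ : SimpleGraph β) :
    perfDomNum (joinG G₁ G₂) = 1 ↔
      (∃ u : α, ∀ w : α, w ≠ u → G₁.Adj u w) ∨ (∃ u : β, ∀ w : β, w ≠ u → G₂.Adj u w) := by
  rw [perfDomNum_eq_one_iff, exists_isUniversal_joinG_iff]
  simp only [SimpleGraph.isUniversal_iff_forall_ne_imp_adj]
end
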